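/- arXiv:2304.03185 — 5 statements merged into one kernel-verified Lean document; each statement's English description precedes it below -/
import Mathlib

section
/- Zhang-type calibration inequality for pairwise ranking with hinge loss: for every measurable f: X² → [-1,1], R(f) - R(f*_rank) ≤ R^φ(f) - R^φ(f*_hinge), where R(f) - R(f*_rank) = E[(η₊ - η₋)·𝟙{η₊>η₋, f<0}] + E[(η₋ - η₊)·𝟙{η₋>η₊, f≥0}] and R^φ(f) - R^φ(f*_hinge) = E[(η₊ - η₋)·(f*_hinge - f)], with f*_hinge = sgn(η₊ - η₋). -/
open MeasureTheory

theorem zhang_calibration_hinge {X : Type*} [MeasurableSpace X]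
    (μ : Measure (X × X)) [IsProbabilityMeasure μ]
    (ηp ηm : X × X → ℝ) (hηp : Measurable ηp) (hηm : Measurable ηm)
    (hp0 : ∀ z, 0 ≤ ηp z) (hm0 : ∀ z, 0 ≤ ηm z) (hsum : ∀ z, ηp z + ηm z ≤ 1)
    (f : X × X → ℝ) (hf : Measurable f) (hfb : ∀ z, f z ∈ Set.Icc (-1 : ℝ) 1) :
    ∫ z, ((ηp z - ηm z) * (if ηm z < ηp z ∧ f z < 0 then 1 else 0)
        + (ηm z - ηp z) * (if ηp z < ηm z ∧ 0 ≤ f z then 1 else 0)) ∂μ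
      ≤ ∫ z, (ηp z - ηm z) * (Real.sign (ηp z - ηm z) - f z) ∂μ := by
  have hb : ∀ z, |ηp z - ηm z| ≤ 1 := fun z => by
    rw [abs_le]
    constructor <;> nlinarith [hp0 z, hm0 z, hsum z]
  have hm1 : Measurable fun z => ((ηp z - ηm z) * (if ηm z < ηp z ∧ f z < 0 then 1 else 0)
        + (ηm z - ηp z) * (if ηp z < ηm z ∧ 0 ≤ f z then 1 else 0)) := by
    apply Measurable.add
    · exact (hηp.sub hηm).mul <| Measurable.ite
        ((measurableSet_lt hηm hηp).inter (measurableSet_lt hf measurable_const))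
        measurable_const measurable_const
    · exact (hηm.sub hηp).mul <| Measurable.ite
        ((measurableSet_lt hηp hηm).inter (measurableSet_le measurable_const hf))
        measurable_const measurable_const
  have hsign : Measurable fun z => Real.sign (ηp z - ηm z) := by
    have : (fun z => Real.sign (ηp z - ηm z))
        = fun z => if ηp z - ηm z < 0 then (-1 : ℝ) else if 0 < ηp z - ηm z then 1 else 0 := by
      funext z; rfl
    rw [this]
    exact Measurable.ite (measurableSet_lt (hηp.sub hηm) measurable_const) measurable_const
      (Measurable.ite (measurableSet_lt measurable_const (hηp.sub hηm)) measurable_const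
        measurable_const)
  have hm2 : Measurable fun z => (ηp z - ηm z) * (Real.sign (ηp z - ηm z) - f z) :=
    (hηp.sub hηm).mul (hsign.sub hf)
  have hi1 : Integrable (fun z => ((ηp z - ηm z) * (if ηm z < ηp z ∧ f z < 0 then 1 else 0)
        + (ηm z - ηp z) * (if ηp z < ηm z ∧ 0 ≤ f z then 1 else 0))) μ := by
    apply Integrable.mono' (integrable_const (2 : ℝ)) hm1.aestronglyMeasurable
    filter_upwards with z
    have h1 := hb z
    have h2 : |ηm z - ηp z| ≤ 1 := by rw [abs_sub_comm]; exact h1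
    calc _ ≤ |(ηp z - ηm z) * (if ηm z < ηp z ∧ f z < 0 then 1 else 0)|
            + |(ηm z - ηp z) * (if ηp z < ηm z ∧ 0 ≤ f z then 1 else 0)| := abs_add_le _ _
      _ ≤ 2 := by
          rw [abs_mul, abs_mul]
          have : ∀ (p : Prop) [Decidable p], |(if p then (1:ℝ) else 0)| ≤ 1 := by
            intro p _; split <;> simp
          nlinarith [this (ηm z < ηp z ∧ f z < 0), this (ηp z < ηm z ∧ 0 ≤ f z),
            abs_nonneg (ηp z - ηm z), abs_nonneg (ηm z - ηp z),
            abs_nonneg (if ηm z < ηp z ∧ f z < 0 then (1:ℝ) else 0),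
            abs_nonneg (if ηp z < ηm z ∧ 0 ≤ f z then (1:ℝ) else 0)]
  have hi2 : Integrable (fun z => (ηp z - ηm z) * (Real.sign (ηp z - ηm z) - f z)) μ := by
    apply Integrable.mono' (integrable_const (2 : ℝ)) hm2.aestronglyMeasurable
    filter_upwards with z
    rw [Real.norm_eq_abs, abs_mul]
    have h1 := hb z
    have hs : |Real.sign (ηp z - ηm z)| ≤ 1 := by
      rcases Real.sign_apply_eq (ηp z - ηm z) with h | h | h <;> rw [h] <;> norm_num
    have hfz := hfb z
    have : |Real.sign (ηp z - ηm z) - f z| ≤ 2 := by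
      calc |Real.sign (ηp z - ηm z) - f z| ≤ |Real.sign (ηp z - ηm z)| + |f z| := abs_sub _ _
        _ ≤ 2 := by
            have : |f z| ≤ 1 := abs_le.mpr ⟨hfz.1, hfz.2⟩
            linarith
    nlinarith [abs_nonneg (ηp z - ηm z), abs_nonneg (Real.sign (ηp z - ηm z) - f z)]
  refine integral_mono hi1 hi2 fun z => ?_
  obtain ⟨hfl, hfu⟩ := hfb z
  rcases lt_trichotomy (ηp z - ηm z) 0 with h | h | h
  · rw [Real.sign_of_neg h]
    have h1 : ¬(ηm z < ηp z ∧ f z < 0) := fun ⟨a, _⟩ => by linarith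
    have h2 : ηp z < ηm z := by linarith
    rw [if_neg h1]
    by_cases hfz : 0 ≤ f z
    · rw [if_pos ⟨h2, hfz⟩]; nlinarith
    · rw [if_neg (fun ⟨_, a⟩ => hfz a)]; nlinarith
  · have he : ηp z = ηm z := by linarith
    rw [h, Real.sign_zero, he]
    split_ifs <;> ring_nf <;> simp
  · rw [Real.sign_of_pos h]
    have h1 : ηm z < ηp z := by linarith
    have h2 : ¬(ηp z < ηm z ∧ 0 ≤ f z) := fun ⟨a, _⟩ => by linarith
    rw [if_neg h2]
    by_cases hfz : f z < 0
    · rw [if_pos ⟨h1, hfz⟩]; nlinarith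
    · rw [if_neg (fun ⟨_, a⟩ => hfz a)]; nlinarith
end

section
/- Pointwise version of the Zhang-type calibration: for a,b ∈ [0,1] and t ∈ [-1,1], a·𝟙{t<0, a>b} + b·𝟙{t≥0, b>a} - min(a,b)·(𝟙{a>b}+𝟙{b>a}) ≤ (a-b)·(sgn(a-b) - t). -/
theorem pointwise_zhang_calibration (a b t : ℝ)
    (ha : a ∈ Set.Icc (0 : ℝ) 1) (hb : b ∈ Set.Icc (0 : ℝ) 1)
    (ht : t ∈ Set.Icc (-1 : ℝ) 1) :
    a * (if t < 0 ∧ b < a then 1 else 0) + b * (if 0 ≤ t ∧ a < b then 1 else 0)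
      - min a b * ((if b < a then 1 else 0) + (if a < b then 1 else 0))
      ≤ (a - b) * (Real.sign (a - b) - t) := by
  obtain ⟨ha0, ha1⟩ := ha
  obtain ⟨hb0, hb1⟩ := hb
  obtain ⟨ht0, ht1⟩ := ht
  rcases lt_trichotomy a b with h | h | h
  · rw [Real.sign_of_neg (by linarith : a - b < 0), min_eq_left h.le]
    simp only [h, h.asymm, and_true, and_false, if_true, if_false]
    split_ifs with h1
    · nlinarith
    · nlinarith
  · simp [h]
  · rw [Real.sign_of_pos (by linarith : 0 < a - b), min_eq_right h.le]
    simp only [h, h.asymm, and_true, and_false, if_true, if_false]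
    split_ifs with h1
    · nlinarith
    · nlinarith
end

section
/- Calibration with noise exponent: suppose for all t > 0, μ{(x,x'): |η₊ - η₋| ≤ t} ≤ C* t^q with C* > 0 and q > 0, and suppose (η₊ - η₋)² ≤ C_ψ · g pointwise on a measurable set A (where g ≥ 0). Then ∫_A |η₊ - η₋| dμ ≤ c · (∫_A g dμ)^{(q+1)/(q+2)} where c = (q+1)^{-(q+1)/(q+2)} C*^{1/(q+2)} C_ψ^{(q+1)/(q+2)} + (q+1)^{1/(q+2)} C*^{1/(q+2)} C_ψ^{(q+1)/(q+2)}. -/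
/-!
Split `A` according to whether the margin `|η₊ - η₋|` is at most `t`. The small-margin part
contributes at most `t · μ{|η₊ - η₋| ≤ t} ≤ C* t^(q+1)`; on the rest
`|η₊ - η₋| ≤ (η₊ - η₋)² / t ≤ C_ψ g / t`. So `∫_A |η₊ - η₋| ≤ C* t^(q+1) + C_ψ (∫_A g) / t` for
every `t > 0`, and the minimiser `t = (C_ψ ∫_A g / ((q+1) C*))^(1/(q+2))` gives the bound.
-/

open MeasureTheory Filter Topology

theorem abs_le_ite_add_div_of_sq_le {x c t : ℝ} (ht : 0 < t) (h : x ^ 2 ≤ c) :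
    |x| ≤ (if |x| ≤ t then t else 0) + c / t := by
  have hc : 0 ≤ c / t := div_nonneg ((sq_nonneg x).trans h) ht.le
  split_ifs with hxt
  · linarith
  · rw [zero_add, le_div_iff₀ ht]
    nlinarith [sq_abs x, abs_nonneg x]

theorem setIntegral_abs_le_of_sq_le {α : Type*} [MeasurableSpace α] {μ : Measure α}
    {f g : α → ℝ} {A : Set α} {C t : ℝ} (hA : MeasurableSet A) (hf : Measurable f)
    (hg : Integrable g μ) (ht : 0 < t) (hfin : μ {z | |f z| ≤ t} ≠ ⊤)
    (hsq : ∀ z ∈ A, f z ^ 2 ≤ C * g z) :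
    ∫ z in A, |f z| ∂μ ≤ t * μ.real {z | |f z| ≤ t} + C * (∫ z in A, g z ∂μ) / t := by
  set S := {z | |f z| ≤ t}
  have hS : MeasurableSet S := measurableSet_le hf.abs measurable_const
  have hpt : ∀ᵐ z ∂μ.restrict A, |f z| ≤ S.indicator (fun _ ↦ t) z + C / t * g z := by
    filter_upwards [ae_restrict_mem hA] with z hz
    rw [Set.indicator_apply, div_mul_eq_mul_div]
    exact abs_le_ite_add_div_of_sq_le ht (hsq z hz)
  have hSA : μ.restrict A S ≤ μ S := Measure.restrict_apply_le A S
  have hind : Integrable (S.indicator fun _ ↦ t) (μ.restrict A) :=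
    (integrable_indicator_iff hS).2 (integrableOn_const (hSA.trans_lt hfin.lt_top).ne)
  calc ∫ z in A, |f z| ∂μ
      ≤ ∫ z in A, (S.indicator (fun _ ↦ t) z + C / t * g z) ∂μ :=
        integral_mono_of_nonneg (ae_of_all _ fun z ↦ abs_nonneg _)
          (hind.add (hg.restrict.const_mul _)) hpt
    _ = (μ.restrict A).real S * t + C / t * ∫ z in A, g z ∂μ := by
        rw [integral_add hind (hg.restrict.const_mul _), integral_indicator_const _ hS,
          integral_const_mul, smul_eq_mul]
    _ ≤ t * μ.real S + C * (∫ z in A, g z ∂μ) / t := by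
        rw [mul_comm _ t, mul_div_right_comm]
        gcongr
        exact ENNReal.toReal_mono hfin hSA

theorem exists_mul_rpow_add_div_eq {a b q : ℝ} (ha : 0 < a) (hb : 0 < b) (hq : 0 < q + 1) :
    ∃ t > 0, a * t ^ (q + 1) + b / t = ((q + 1) ^ (-(q + 1) / (q + 2)) + (q + 1) ^ (1 / (q + 2)))
      * a ^ (1 / (q + 2)) * b ^ ((q + 1) / (q + 2)) := by
  have hq2 : 0 < q + 2 := by linarith
  have hqa : 0 < (q + 1) * a := mul_pos hq ha
  set t := (b / ((q + 1) * a)) ^ (1 / (q + 2)) with ht_def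
  have ht : 0 < t := Real.rpow_pos_of_pos (div_pos hb hqa) _
  have ht_pow : t ^ (q + 2) = b / ((q + 1) * a) := by
    rw [← Real.rpow_mul (div_pos hb hqa).le, one_div_mul_cancel hq2.ne', Real.rpow_one]
  have hb_split : b ^ ((q + 1) / (q + 2)) = b / b ^ (1 / (q + 2)) := by
    rw [show (q + 1) / (q + 2) = 1 - 1 / (q + 2) by field_simp; ring, Real.rpow_sub hb,
      Real.rpow_one]
  have hbt : b / t = (q + 1) ^ (1 / (q + 2)) * a ^ (1 / (q + 2)) * b ^ ((q + 1) / (q + 2)) := by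
    rw [hb_split, ht_def, Real.div_rpow hb.le hqa.le, Real.mul_rpow hq.le ha.le]
    have hbs : 0 < b ^ (1 / (q + 2)) := Real.rpow_pos_of_pos hb _
    field_simp
  have hat : a * t ^ (q + 1) = b / t / (q + 1) := by
    rw [show t ^ (q + 1) = t ^ (q + 2) / t by rw [← Real.rpow_sub_one ht.ne']; ring_nf, ht_pow]
    field_simp
  have hk : (q + 1) ^ (-(q + 1) / (q + 2)) = (q + 1) ^ (1 / (q + 2)) / (q + 1) := by
    rw [← Real.rpow_sub_one hq.ne']
    congr 1
    field_simp
    ring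
  refine ⟨t, ht, ?_⟩
  rw [hat, hk, hbt]
  field_simp

theorem le_zero_of_forall_le_mul_rpow {x a p : ℝ} (hp : 0 < p) (h : ∀ t > 0, x ≤ a * t ^ p) :
    x ≤ 0 := by
  have hlim : Tendsto (fun t : ℝ ↦ a * t ^ p) (𝓝[>] 0) (𝓝 0) := by
    have := ((Real.continuousAt_rpow_const 0 p (Or.inr hp.le)).tendsto.const_mul a)
    rw [Real.zero_rpow hp.ne', mul_zero] at this
    exact tendsto_nhdsWithin_of_tendsto_nhds this
  exact ge_of_tendsto hlim (eventually_mem_nhdsWithin.mono fun t ht ↦ h t ht)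

theorem le_of_forall_le_mul_rpow_add_div {x a b q : ℝ} (ha : 0 < a) (hb : 0 ≤ b) (hq : 0 < q + 1)
    (h : ∀ t > 0, x ≤ a * t ^ (q + 1) + b / t) :
    x ≤ ((q + 1) ^ (-(q + 1) / (q + 2)) + (q + 1) ^ (1 / (q + 2)))
      * a ^ (1 / (q + 2)) * b ^ ((q + 1) / (q + 2)) := by
  rcases hb.eq_or_lt with rfl | hb
  · rw [Real.zero_rpow (div_pos hq (by linarith)).ne', mul_zero]
    exact le_zero_of_forall_le_mul_rpow hq fun t ht ↦ by simpa using h t ht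
  · obtain ⟨t, ht, heq⟩ := exists_mul_rpow_add_div_eq ha hb hq
    exact heq ▸ h t ht

theorem calibration_with_noise_exponent_general {α : Type*} [MeasurableSpace α]
    (μ : Measure α)
    (ηp ηm : α → ℝ) (hηp : Measurable ηp) (hηm : Measurable ηm)
    (g : α → ℝ) (hg : Integrable g μ)
    (A : Set α) (hA : MeasurableSet A)
    (Cs q Cψ : ℝ) (hCs : 0 < Cs) (hq : 0 < q) (hCψ : 0 < Cψ)
    (hnoise : ∀ t > 0, μ {z | |ηp z - ηm z| ≤ t} ≤ ENNReal.ofReal (Cs * t ^ q))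
    (hcal : ∀ z ∈ A, (ηp z - ηm z) ^ 2 ≤ Cψ * g z) :
    ∫ z in A, |ηp z - ηm z| ∂μ ≤
      ((q + 1) ^ (-(q + 1) / (q + 2)) * Cs ^ ((1 : ℝ) / (q + 2)) * Cψ ^ ((q + 1) / (q + 2))
        + (q + 1) ^ ((1 : ℝ) / (q + 2)) * Cs ^ ((1 : ℝ) / (q + 2)) * Cψ ^ ((q + 1) / (q + 2)))
        * (∫ z in A, g z ∂μ) ^ ((q + 1) / (q + 2)) := by
  set G := ∫ z in A, g z ∂μ
  have hG : 0 ≤ G := setIntegral_nonneg hA fun z hz ↦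
    nonneg_of_mul_nonneg_right ((sq_nonneg _).trans (hcal z hz)) hCψ
  have hsplit : ∀ t > 0, ∫ z in A, |ηp z - ηm z| ∂μ ≤ Cs * t ^ (q + 1) + Cψ * G / t := by
    intro t ht
    have hsmall : μ.real {z | |ηp z - ηm z| ≤ t} ≤ Cs * t ^ q :=
      ENNReal.toReal_le_of_le_ofReal (by positivity) (hnoise t ht)
    calc ∫ z in A, |ηp z - ηm z| ∂μ
        ≤ t * μ.real {z | |ηp z - ηm z| ≤ t} + Cψ * G / t :=
          setIntegral_abs_le_of_sq_le hA (hηp.sub hηm) hg ht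
            (ne_top_of_le_ne_top ENNReal.ofReal_ne_top (hnoise t ht)) hcal
      _ ≤ t * (Cs * t ^ q) + Cψ * G / t := by gcongr
      _ = Cs * t ^ (q + 1) + Cψ * G / t := by rw [Real.rpow_add_one ht.ne']; ring
  calc ∫ z in A, |ηp z - ηm z| ∂μ
      ≤ ((q + 1) ^ (-(q + 1) / (q + 2)) + (q + 1) ^ (1 / (q + 2)))
          * Cs ^ (1 / (q + 2)) * (Cψ * G) ^ ((q + 1) / (q + 2)) :=
        le_of_forall_le_mul_rpow_add_div hCs (mul_nonneg hCψ.le hG) (by linarith) hsplit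
    _ = _ := by rw [Real.mul_rpow hCψ.le hG]; ring

theorem calibration_with_noise_exponent {α : Type*} [MeasurableSpace α]
    (μ : Measure α) [IsProbabilityMeasure μ]
    (ηp ηm : α → ℝ) (hηp : Measurable ηp) (hηm : Measurable ηm)
    (hp : ∀ z, ηp z ∈ Set.Icc (0 : ℝ) 1) (hm : ∀ z, ηm z ∈ Set.Icc (0 : ℝ) 1)
    (g : α → ℝ) (hg : Integrable g μ) (hg0 : ∀ z, 0 ≤ g z)
    (A : Set α) (hA : MeasurableSet A)
    (Cs q Cψ : ℝ) (hCs : 0 < Cs) (hq : 0 < q) (hCψ : 0 < Cψ)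
    (hnoise : ∀ t > 0, μ {z | |ηp z - ηm z| ≤ t} ≤ ENNReal.ofReal (Cs * t ^ q))
    (hcal : ∀ z ∈ A, (ηp z - ηm z) ^ 2 ≤ Cψ * g z) :
    ∫ z in A, |ηp z - ηm z| ∂μ ≤
      ((q + 1) ^ (-(q + 1) / (q + 2)) * Cs ^ ((1 : ℝ) / (q + 2)) * Cψ ^ ((q + 1) / (q + 2))
        + (q + 1) ^ ((1 : ℝ) / (q + 2)) * Cs ^ ((1 : ℝ) / (q + 2)) * Cψ ^ ((q + 1) / (q + 2)))
        * (∫ z in A, g z ∂μ) ^ ((q + 1) / (q + 2)) :=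
  calibration_with_noise_exponent_general μ ηp ηm hηp hηm g hg A hA Cs q Cψ hCs hq hCψ hnoise hcal
end

section
/- Variance bound for hinge loss under Tsybakov-type noise: if μ{|η₊ - η₋| ≤ t} ≤ C* t^q for all t > 0 (q ∈ (0,∞), C* > 0), then for every measurable f: X² → [-1,1], ∫ |f - f*|² dμ ≤ 2∫|f - f*| dμ ≤ V · (∫ |f - f*|·|η₊ - η₋| dμ)^{q/(q+1)}, where f* = sgn(η₊ - η₋) and V = 2^{(q+2)/(q+1)} C*^{1/(q+1)} q^{1/(q+1)} (1 + 1/q). -/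
/-!
Split the space at a level `t > 0` of the margin `w = |η₊ - η₋|`. Where `w ≤ t` the loss
`g = |f - f*|` is at most `2`, and the noise condition bounds the measure of that set by
`C* t^q`; elsewhere `g ≤ g w / t`. Hence `∫ g ≤ 2 C* t^q + (∫ g w) / t` for every `t > 0`,
and choosing `t` to balance the two terms gives the bound. The square term is handled by
`g² ≤ 2 g`.
-/

open MeasureTheory Filter Topology

lemma Real.monotone_sign : Monotone Real.sign := by
  intro a b hab
  rcases lt_trichotomy a 0 with ha | ha | ha <;> rcases lt_trichotomy b 0 with hb | hb | hb <;>
    simp [Real.sign_of_neg, Real.sign_of_pos, ha, hb] <;> linarith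

lemma Real.measurable_sign : Measurable Real.sign :=
  Real.monotone_sign.measurable

lemma Real.abs_sign_le_one (x : ℝ) : |Real.sign x| ≤ 1 := by
  rcases Real.sign_apply_eq x with h | h | h <;> simp [h]

lemma exists_pos_mul_rpow_add_div_eq {M C q A : ℝ} (hM : 0 < M) (hC : 0 < C) (hq : 0 < q)
    (hA : 0 < A) :
    ∃ t > 0, M * (C * t ^ q) + A / t
      = (M * q * C) ^ (1 / (q + 1)) * (1 + 1 / q) * A ^ (q / (q + 1)) := by
  set B := M * q * C with hB_def
  have hB : 0 < B := by positivity
  set s := 1 / (q + 1) with hs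
  have hsq : s * (q + 1) = 1 := by rw [hs]; field_simp
  have hrs : q / (q + 1) + s = 1 := by rw [hs]; field_simp
  refine ⟨(A / B) ^ s, by positivity, ?_⟩
  set t := (A / B) ^ s with ht_def
  have ht : 0 < t := by positivity
  -- `t ^ (q + 1) = A / B` is exactly the balancing condition `M C t ^ q = A / (q t)`.
  have htq : t ^ q = A / B / t := by
    rw [eq_div_iff ht.ne', ← Real.rpow_add_one ht.ne', ht_def, ← Real.rpow_mul (by positivity),
      hsq, Real.rpow_one]
  have hAt : A / t = A ^ (q / (q + 1)) * B ^ s := by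
    rw [ht_def, Real.div_rpow hA.le hB.le, div_div_eq_mul_div, div_eq_iff (by positivity),
      mul_right_comm, ← Real.rpow_add hA, hrs, Real.rpow_one]
  calc M * (C * t ^ q) + A / t = A / t * (1 + 1 / q) := by
        rw [htq, hB_def]; field_simp; ring
    _ = _ := by rw [hAt]; ring

lemma integral_sq_le_mul_integral {α : Type*} [MeasurableSpace α] {μ : Measure α}
    {g : α → ℝ} {M : ℝ} (hg : Integrable g μ) (hg0 : ∀ z, 0 ≤ g z)
    (hgM : ∀ z, g z ≤ M) : ∫ z, g z ^ 2 ∂μ ≤ M * ∫ z, g z ∂μ := by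
  rw [← integral_const_mul]
  refine integral_mono_of_nonneg (.of_forall fun z => sq_nonneg _) (hg.const_mul M)
    (.of_forall fun z => ?_)
  nlinarith [hg0 z, hgM z]

section MarginSplit

variable {α : Type*} [MeasurableSpace α] {μ : Measure α} [IsFiniteMeasure μ]
  {g w : α → ℝ} {M : ℝ}

lemma integral_le_mul_measureReal_add_div (hg : Integrable g μ)
    (hgw : Integrable (fun z => g z * w z) μ) (hw : Measurable w) (hg0 : ∀ z, 0 ≤ g z)
    (hgM : ∀ z, g z ≤ M) (hw0 : ∀ z, 0 ≤ w z) {t : ℝ} (ht : 0 < t) :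
    ∫ z, g z ∂μ ≤ M * μ.real {z | w z ≤ t} + (∫ z, g z * w z ∂μ) / t := by
  set S := {z | w z ≤ t}
  have hS : MeasurableSet S := hw measurableSet_Iic
  have hpointwise : ∀ z, g z ≤ S.indicator (fun _ => M) z + g z * w z / t := by
    intro z
    by_cases hz : z ∈ S
    · rw [Set.indicator_of_mem hz]
      have : 0 ≤ g z * w z / t := div_nonneg (mul_nonneg (hg0 z) (hw0 z)) ht.le
      linarith [hgM z]
    · rw [Set.indicator_of_notMem hz, zero_add, le_div_iff₀ ht]
      exact mul_le_mul_of_nonneg_left (not_le.mp hz).le (hg0 z)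
  have hind : Integrable (S.indicator fun _ => M) μ := (integrable_const M).indicator hS
  calc ∫ z, g z ∂μ ≤ ∫ z, (S.indicator (fun _ => M) z + g z * w z / t) ∂μ :=
        integral_mono hg (hind.add (hgw.div_const t)) hpointwise
    _ = M * μ.real S + (∫ z, g z * w z ∂μ) / t := by
        rw [integral_add hind (hgw.div_const t), integral_indicator_const _ hS, integral_div,
          smul_eq_mul, mul_comm]

lemma integral_le_of_measure_le_rpow (hg : Integrable g μ)
    (hgw : Integrable (fun z => g z * w z) μ) (hw : Measurable w) (hg0 : ∀ z, 0 ≤ g z)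
    (hgM : ∀ z, g z ≤ M) (hw0 : ∀ z, 0 ≤ w z) (hM : 0 < M) {C q : ℝ} (hC : 0 < C)
    (hq : 0 < q)
    (hnoise : ∀ t > 0, μ {z | w z ≤ t} ≤ ENNReal.ofReal (C * t ^ q)) :
    ∫ z, g z ∂μ
      ≤ (M * q * C) ^ (1 / (q + 1)) * (1 + 1 / q) * (∫ z, g z * w z ∂μ) ^ (q / (q + 1)) := by
  have hA0 : 0 ≤ ∫ z, g z * w z ∂μ := integral_nonneg fun z => mul_nonneg (hg0 z) (hw0 z)
  have hsplit : ∀ t > 0, ∫ z, g z ∂μ ≤ M * (C * t ^ q) + (∫ z, g z * w z ∂μ) / t := by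
    intro t ht
    have hμ : μ.real {z | w z ≤ t} ≤ C * t ^ q :=
      ENNReal.toReal_le_of_le_ofReal (by positivity) (hnoise t ht)
    have := integral_le_mul_measureReal_add_div hg hgw hw hg0 hgM hw0 ht
    nlinarith
  generalize (∫ z, g z * w z ∂μ) = A at hA0 hsplit ⊢
  rcases hA0.lt_or_eq with hA | rfl
  · obtain ⟨t, ht, heq⟩ := exists_pos_mul_rpow_add_div_eq hM hC hq hA
    exact heq ▸ hsplit t ht
  · have hlim : Tendsto (fun t : ℝ => M * (C * t ^ q)) (𝓝[>] 0) (𝓝 0) := by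
      have : ContinuousAt (fun t : ℝ => M * (C * t ^ q)) 0 :=
        continuousAt_const.mul (continuousAt_const.mul (Real.continuousAt_rpow_const _ _
          (Or.inr hq.le)))
      simpa [Real.zero_rpow hq.ne'] using this.tendsto.mono_left nhdsWithin_le_nhds
    rw [Real.zero_rpow (by positivity), mul_zero]
    exact ge_of_tendsto hlim (eventually_nhdsWithin_of_forall fun t ht => by
      simpa using hsplit t ht)

end MarginSplit

lemma two_mul_rpow_two_mul_mul {C q : ℝ} (hC : 0 < C) (hq : 0 < q) :
    2 * (2 * q * C) ^ (1 / (q + 1))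
      = 2 ^ ((q + 2) / (q + 1)) * C ^ (1 / (q + 1)) * q ^ (1 / (q + 1)) := by
  have hexp : (q + 2) / (q + 1) = 1 + 1 / (q + 1) := by field_simp; ring
  rw [hexp, Real.rpow_add two_pos, Real.rpow_one, Real.mul_rpow (by positivity) hC.le,
    Real.mul_rpow zero_le_two hq.le]
  ring

theorem hinge_variance_bound {α : Type*} [MeasurableSpace α]
    (μ : Measure α) [IsProbabilityMeasure μ]
    (ηp ηm : α → ℝ) (hηp : Measurable ηp) (hηm : Measurable ηm)
    (hp : ∀ z, ηp z ∈ Set.Icc (0 : ℝ) 1) (hm : ∀ z, ηm z ∈ Set.Icc (0 : ℝ) 1)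
    (Cs q : ℝ) (hCs : 0 < Cs) (hq : 0 < q)
    (hnoise : ∀ t > 0, μ {z | |ηp z - ηm z| ≤ t} ≤ ENNReal.ofReal (Cs * t ^ q))
    (f : α → ℝ) (hf : Measurable f) (hfb : ∀ z, f z ∈ Set.Icc (-1 : ℝ) 1) :
    (∫ z, |f z - Real.sign (ηp z - ηm z)| ^ 2 ∂μ
        ≤ 2 * ∫ z, |f z - Real.sign (ηp z - ηm z)| ∂μ) ∧
    (2 * ∫ z, |f z - Real.sign (ηp z - ηm z)| ∂μ
        ≤ (2 ^ ((q + 2) / (q + 1)) * Cs ^ ((1 : ℝ) / (q + 1)) * q ^ ((1 : ℝ) / (q + 1))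
            * (1 + 1 / q))
          * (∫ z, |f z - Real.sign (ηp z - ηm z)| * |ηp z - ηm z| ∂μ) ^ (q / (q + 1))) := by
  set g := fun z => |f z - Real.sign (ηp z - ηm z)|
  set w := fun z => |ηp z - ηm z|
  have hg_le : ∀ z, g z ≤ 2 := fun z =>
    (abs_sub _ _).trans (by linarith [abs_le.mpr (hfb z), Real.abs_sign_le_one (ηp z - ηm z)])
  have hw_le : ∀ z, w z ≤ 1 := fun z =>
    abs_sub_le_iff.mpr ⟨by linarith [(hp z).2, (hm z).1], by linarith [(hp z).1, (hm z).2]⟩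
  have hw : Measurable w := (hηp.sub hηm).abs
  have hg : Integrable g μ :=
    .of_bound (hf.sub (Real.measurable_sign.comp (hηp.sub hηm))).abs.aestronglyMeasurable 2
      (.of_forall fun z => by rw [Real.norm_eq_abs, abs_abs]; exact hg_le z)
  have hgw : Integrable (fun z => g z * w z) μ :=
    hg.mul_bdd hw.aestronglyMeasurable (.of_forall fun z => by
      rw [Real.norm_eq_abs, abs_abs]; exact hw_le z)
  have hbound := integral_le_of_measure_le_rpow hg hgw hw (fun z => abs_nonneg _) hg_le
    (fun z => abs_nonneg _) two_pos hCs hq hnoise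
  refine ⟨integral_sq_le_mul_integral hg (fun z => abs_nonneg _) hg_le, ?_⟩
  calc 2 * ∫ z, g z ∂μ
      ≤ 2 * ((2 * q * Cs) ^ (1 / (q + 1)) * (1 + 1 / q)
          * (∫ z, g z * w z ∂μ) ^ (q / (q + 1))) := by gcongr
    _ = _ := by rw [← two_mul_rpow_two_mul_mul hCs hq]; ring
end

section
/- Variance bound for square loss: for a,b ∈ [0,1] with a+b ≤ 1 and t, t* ∈ [-1,1] where t* = (a-b)/(a+b) (assume a+b > 0), one has a·((1-t)² - (1-t*)²)² + b·((1+t)² - (1+t*)²)² ≤ 16·(a+b)·(t - t*)². -/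
theorem square_loss_variance_pointwise (a b t : ℝ)
    (ha : a ∈ Set.Icc (0 : ℝ) 1) (hb : b ∈ Set.Icc (0 : ℝ) 1)
    (hab1 : a + b ≤ 1) (hab : 0 < a + b) (ht : t ∈ Set.Icc (-1 : ℝ) 1) :
    let tstar : ℝ := (a - b) / (a + b)
    a * ((1 - t) ^ 2 - (1 - tstar) ^ 2) ^ 2 + b * ((1 + t) ^ 2 - (1 + tstar) ^ 2) ^ 2
      ≤ 16 * (a + b) * (t - tstar) ^ 2 := by
  intro tstar
  obtain ⟨ha0, ha1⟩ := ha
  obtain ⟨hb0, hb1⟩ := hb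
  obtain ⟨ht1, ht2⟩ := ht
  have hs1 : tstar ≤ 1 := by
    rw [div_le_one hab]; linarith
  have hs2 : -1 ≤ tstar := by
    rw [le_div_iff₀ hab]; linarith
  have e1 : (1 - t) ^ 2 - (1 - tstar) ^ 2 = (2 - t - tstar) * (tstar - t) := by ring
  have e2 : (1 + t) ^ 2 - (1 + tstar) ^ 2 = (2 + t + tstar) * (t - tstar) := by ring
  rw [e1, e2]
  have h1 : (2 - t - tstar) ^ 2 ≤ 16 := by nlinarith
  have h2 : (2 + t + tstar) ^ 2 ≤ 16 := by nlinarith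
  have hsq : (0:ℝ) ≤ (t - tstar) ^ 2 := sq_nonneg _
  nlinarith [mul_le_mul_of_nonneg_left h1 ha0, mul_le_mul_of_nonneg_left h2 hb0,
    mul_nonneg ha0 hsq, mul_nonneg hb0 hsq, sq_nonneg (tstar - t)]
end
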